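/- arXiv:2409.10474 — 5 statements merged into one kernel-verified Lean document; each statement's English description precedes it below -/
import Mathlib

section
/- Let A be a locally C*-algebra with defining family {p_λ}. An element a ∈ A is local positive (i.e., a = b*b + c with p_λ(c) = 0 for some λ and some b ∈ A) if and only if there exists λ ∈ Λ such that π_λ(a) is positive in the C*-algebra A_λ. -/
open scoped ComplexOrder

/-- A C*-seminorm on a complex *-algebra. -/
structure IsCstarSeminorm {A : Type*} [Ring A] [StarRing A] [Algebra ℂ A] (p : A → ℝ) : Prop where
  nonneg : ∀ a, 0 ≤ p a
  map_zero' : p 0 = 0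
  add_le : ∀ a b, p (a + b) ≤ p a + p b
  smul : ∀ (c : ℂ) (a : A), p (c • a) = ‖c‖ * p a
  mul_le : ∀ a b, p (a * b) ≤ p a * p b
  star_eq : ∀ a, p (star a) = p a
  cstar : ∀ a, p (star a * a) = p a ^ 2

/-- The family of canonical C*-seminorms on the matrix algebras `Mₙ(A)` induced by a
C*-seminorm `p` on `A`. -/
structure IsMatrixCstarSeminormFamily {A : Type*} [Ring A] [StarRing A] [Algebra ℂ A]
    (p : A → ℝ) (pn : ∀ n : ℕ, Matrix (Fin n) (Fin n) A → ℝ) : Prop where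
  cstar : ∀ n, IsCstarSeminorm (pn n)
  ker : ∀ n (M : Matrix (Fin n) (Fin n) A), pn n M = 0 ↔ ∀ i j, p (M i j) = 0
  one : ∀ a : A, pn 1 (fun _ _ => a) = p a

/-- `λ`-positivity of a matrix over `A` relative to the matrix seminorm `pn` (at level `λ`):
`M = b*b + c` with `pn c = 0`. -/
def LamPos {A : Type*} [Ring A] [StarRing A]
    (pn : ∀ n : ℕ, Matrix (Fin n) (Fin n) A → ℝ) (n : ℕ)
    (M : Matrix (Fin n) (Fin n) A) : Prop :=
  ∃ x c : Matrix (Fin n) (Fin n) A, pn n c = 0 ∧ M = star x * x + c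

/-- Positivity of a matrix of bounded operators, i.e. positivity in `B(H^{⊕n}) ≅ Mₙ(B(H))`. -/
def MatPosOp {H : Type*} [NormedAddCommGroup H] [InnerProductSpace ℂ H] [CompleteSpace H]
    {n : ℕ} (T : Matrix (Fin n) (Fin n) (H →L[ℂ] H)) : Prop :=
  ∃ X : Matrix (Fin n) (Fin n) (H →L[ℂ] H), T = star X * X

/-- The bounded operator on `H^{⊕n}` (with the `ℓ²`-Hilbert space structure) induced by an
`n × n` matrix of bounded operators on `H`. -/
noncomputable def matOp {H : Type*} [NormedAddCommGroup H] [InnerProductSpace ℂ H]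
    {n : ℕ} (T : Matrix (Fin n) (Fin n) (H →L[ℂ] H)) :
    PiLp 2 (fun _ : Fin n => H) →L[ℂ] PiLp 2 (fun _ : Fin n => H) :=
  ((PiLp.continuousLinearEquiv 2 ℂ (fun _ : Fin n => H)).symm :
      ((_ : Fin n) → H) →L[ℂ] PiLp 2 (fun _ : Fin n => H)) ∘L
    (ContinuousLinearMap.pi fun i => ∑ j, (T i j) ∘L (ContinuousLinearMap.proj j)) ∘L
    ((PiLp.continuousLinearEquiv 2 ℂ (fun _ : Fin n => H)) :
      PiLp 2 (fun _ : Fin n => H) →L[ℂ] ((_ : Fin n) → H))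

/-- A map into `B(H)` has trivial commutant (irreducibility). -/
def HasTrivialCommutant {R H : Type*} [NormedAddCommGroup H] [InnerProductSpace ℂ H]
    (φ : R → (H →L[ℂ] H)) : Prop :=
  ∀ T : H →L[ℂ] H, (∀ a, T * φ a = φ a * T) → ∃ c : ℂ, T = c • (1 : H →L[ℂ] H)

/-- Complete positivity at level `λ` for a linear map defined on all of `A`, with values in
`B(H)`: `λ`-positive matrices go to positive operator matrices, and matrices annihilated by the
`λ`-th matrix seminorm go to zero. -/
def IsLamCPmap {A H : Type*} [Ring A] [StarRing A] [Algebra ℂ A]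
    [NormedAddCommGroup H] [InnerProductSpace ℂ H] [CompleteSpace H]
    (pn : ∀ n : ℕ, Matrix (Fin n) (Fin n) A → ℝ) (φ : A →ₗ[ℂ] (H →L[ℂ] H)) : Prop :=
  (∀ (n : ℕ) (M : Matrix (Fin n) (Fin n) A), LamPos pn n M → MatPosOp (M.map φ)) ∧
  (∀ (n : ℕ) (M : Matrix (Fin n) (Fin n) A), pn n M = 0 → M.map φ = 0)

/-- Complete positivity at level `λ` for a linear map defined on a local operator system
`S ⊆ A`, with values in `B(H)`. -/
def IsLamCPmapOn {A H : Type*} [Ring A] [StarRing A] [Algebra ℂ A]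
    [NormedAddCommGroup H] [InnerProductSpace ℂ H] [CompleteSpace H]
    (pn : ∀ n : ℕ, Matrix (Fin n) (Fin n) A → ℝ) (S : Submodule ℂ A)
    (φ : ↥S →ₗ[ℂ] (H →L[ℂ] H)) : Prop :=
  (∀ (n : ℕ) (M : Matrix (Fin n) (Fin n) ↥S), LamPos pn n (M.map Subtype.val) →
      MatPosOp (M.map fun s => φ s)) ∧
  (∀ (n : ℕ) (M : Matrix (Fin n) (Fin n) ↥S), pn n (M.map Subtype.val) = 0 →
      M.map (fun s => φ s) = 0)

/-- Complete positivity (in the C*-algebraic, purely algebraic sense) of a linear map from a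
ring with involution to `B(H)`: matrices of the form `x*x` are sent to positive operator
matrices. For a C*-algebra this is the usual notion of complete positivity. -/
def IsCstarCPmap {R H : Type*} [Ring R] [StarRing R] [Algebra ℂ R]
    [NormedAddCommGroup H] [InnerProductSpace ℂ H] [CompleteSpace H]
    (φ : R →ₗ[ℂ] (H →L[ℂ] H)) : Prop :=
  ∀ (n : ℕ) (M : Matrix (Fin n) (Fin n) R),
    (∃ x : Matrix (Fin n) (Fin n) R, M = star x * x) → MatPosOp (M.map φ)

/-- A boundary representation (in the sense of Arveson) of a C*-algebra `R` for the operator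
system `T ⊆ R`: an irreducible representation which is the unique unital completely positive
extension of its restriction to `T`. -/
def IsBoundaryRep {R H : Type*} [Ring R] [StarRing R] [Algebra ℂ R]
    [NormedAddCommGroup H] [InnerProductSpace ℂ H] [CompleteSpace H]
    (T : Set R) (ψ : R →⋆ₐ[ℂ] (H →L[ℂ] H)) : Prop :=
  HasTrivialCommutant ⇑ψ ∧
  ∀ χ : R →ₗ[ℂ] (H →L[ℂ] H), χ 1 = 1 → IsCstarCPmap χ → (∀ t ∈ T, χ t = ψ t) →
    ∀ b, χ b = ψ b

/-- An admissible local boundary representation of the locally C*-algebra `A` for the local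
operator system `S ⊆ A`. -/
def IsAdmLocBdryRep {Λ A H : Type*} [Ring A] [StarRing A] [Algebra ℂ A]
    [NormedAddCommGroup H] [InnerProductSpace ℂ H] [CompleteSpace H]
    (p : Λ → A → ℝ) (pn : Λ → ∀ n : ℕ, Matrix (Fin n) (Fin n) A → ℝ)
    (S : Submodule ℂ A) (π : A →⋆ₐ[ℂ] (H →L[ℂ] H)) : Prop :=
  HasTrivialCommutant ⇑π ∧
  ∃ l₀ : Λ, (∀ a, ‖π a‖ ≤ p l₀ a) ∧
    ∀ φ : A →ₗ[ℂ] (H →L[ℂ] H), φ 1 = 1 → (∃ l, IsLamCPmap (pn l) φ) →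
      (∀ a, ‖φ a‖ ≤ p l₀ a) → (∀ s ∈ S, φ s = π s) → ∀ a, φ a = π a

/-- An admissible local completely positive map between local operator systems
`S₁ ⊆ A₁` and `S₂ ⊆ A₂` (same index set `Λ` of seminorms). -/
def IsAdmLocCP {Λ A₁ A₂ : Type*} [Ring A₁] [StarRing A₁] [Algebra ℂ A₁]
    [Ring A₂] [StarRing A₂] [Algebra ℂ A₂]
    (pn₁ : Λ → ∀ n : ℕ, Matrix (Fin n) (Fin n) A₁ → ℝ)
    (pn₂ : Λ → ∀ n : ℕ, Matrix (Fin n) (Fin n) A₂ → ℝ)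
    (S₁ : Submodule ℂ A₁) (S₂ : Submodule ℂ A₂) (φ : ↥S₁ →ₗ[ℂ] ↥S₂) : Prop :=
  ∀ (l : Λ) (n : ℕ) (M : Matrix (Fin n) (Fin n) ↥S₁),
    (LamPos (pn₁ l) n (M.map Subtype.val) →
      LamPos (pn₂ l) n (M.map fun s => ((φ s : ↥S₂) : A₂))) ∧
    (pn₁ l n (M.map Subtype.val) = 0 → pn₂ l n (M.map fun s => ((φ s : ↥S₂) : A₂)) = 0)

/-- A local completely isometric map between local operator systems. -/
def IsLocCompIsometric {Λ A₁ A₂ : Type*} [Ring A₁] [StarRing A₁] [Algebra ℂ A₁]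
    [Ring A₂] [StarRing A₂] [Algebra ℂ A₂]
    (pn₁ : Λ → ∀ n : ℕ, Matrix (Fin n) (Fin n) A₁ → ℝ)
    (pn₂ : Λ → ∀ n : ℕ, Matrix (Fin n) (Fin n) A₂ → ℝ)
    (S₁ : Submodule ℂ A₁) (S₂ : Submodule ℂ A₂) (φ : ↥S₁ →ₗ[ℂ] ↥S₂) : Prop :=
  ∀ (l : Λ) (n : ℕ) (M : Matrix (Fin n) (Fin n) ↥S₁),
    pn₂ l n (M.map fun s => ((φ s : ↥S₂) : A₂)) = pn₁ l n (M.map Subtype.val)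

/-- A completely positive map (algebraic sense) between operator systems `T₁ ⊆ R₁`, `T₂ ⊆ R₂`
sitting in C*-algebras. -/
def IsCstarCPmapOn {R₁ R₂ : Type*} [Ring R₁] [StarRing R₁] [Algebra ℂ R₁]
    [Ring R₂] [StarRing R₂] [Algebra ℂ R₂]
    (T₁ : Submodule ℂ R₁) (T₂ : Submodule ℂ R₂) (ψ : ↥T₁ →ₗ[ℂ] ↥T₂) : Prop :=
  ∀ (n : ℕ) (M : Matrix (Fin n) (Fin n) ↥T₁),
    (∃ x : Matrix (Fin n) (Fin n) R₁, M.map Subtype.val = star x * x) →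
    ∃ y : Matrix (Fin n) (Fin n) R₂, M.map (fun s => ((ψ s : ↥T₂) : R₂)) = star y * y

/-- A local boundary ideal for a local operator system `S ⊆ A`: a closed two-sided *-ideal such
that the quotient map is completely isometric on `S` with respect to the quotient matrix
seminorms. -/
def IsLocBdryIdeal {Λ A : Type*} [Ring A] [StarRing A] [Algebra ℂ A] [TopologicalSpace A]
    (pn : Λ → ∀ n : ℕ, Matrix (Fin n) (Fin n) A → ℝ) (S : Submodule ℂ A)
    (I : Set A) : Prop :=
  (∃ J : TwoSidedIdeal A, (J : Set A) = I) ∧ (∀ a ∈ I, star a ∈ I) ∧ IsClosed I ∧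
  ∀ (l : Λ) (n : ℕ) (M : Matrix (Fin n) (Fin n) ↥S),
    sInf {r : ℝ | ∃ C : Matrix (Fin n) (Fin n) A, (∀ i j, C i j ∈ I) ∧
        r = pn l n (M.map Subtype.val + C)} = pn l n (M.map Subtype.val)


/-- `a` is local positive iff `π_λ(a)` is positive in `A_λ` for some `λ`. -/
theorem stmt4 {Λ : Type*} [Preorder Λ] {A : Type*} [Ring A] [StarRing A] [Algebra ℂ A]
    {B : Λ → Type*} [∀ l, NormedRing (B l)] [∀ l, StarRing (B l)] [∀ l, CStarRing (B l)]
    [∀ l, NormedAlgebra ℂ (B l)] [∀ l, StarModule ℂ (B l)] [∀ l, CompleteSpace (B l)]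
    (p : Λ → A → ℝ) (hp : ∀ l, IsCstarSeminorm (p l))
    (hmono : ∀ ⦃l₁ l₂ : Λ⦄, l₁ ≤ l₂ → ∀ a, p l₁ a ≤ p l₂ a)
    (π : ∀ l, A →⋆ₐ[ℂ] B l) (hsurj : ∀ l, Function.Surjective ⇑(π l))
    (hnorm : ∀ l a, ‖(π l) a‖ = p l a)
    [∀ l, PartialOrder (B l)] [∀ l, StarOrderedRing (B l)] (a : A) :
    (∃ (l : Λ) (b c : A), p l c = 0 ∧ a = star b * b + c) ↔
      ∃ l : Λ, 0 ≤ (π l) a := by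
  constructor
  · rintro ⟨l, b, c, hc, rfl⟩
    refine ⟨l, ?_⟩
    have hπc : (π l) c = 0 := by
      have := hnorm l c
      rw [hc] at this
      exact norm_eq_zero.mp this
    rw [map_add, map_mul, map_star, hπc, add_zero]
    exact star_mul_self_nonneg _
  · rintro ⟨l, hl⟩
    letI : CStarAlgebra (B l) := {}
    have hy : ∃ y : B l, (π l) a = star y * y :=
      ⟨CFC.sqrt ((π l) a), by
        rw [(IsSelfAdjoint.of_nonneg (CFC.sqrt_nonneg (a := (π l) a))).star_eq,
          CFC.sqrt_mul_sqrt_self _ hl]⟩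
    obtain ⟨y, hy⟩ := hy
    obtain ⟨b, rfl⟩ := hsurj l y
    refine ⟨l, b, a - star b * b, ?_, by abel⟩
    have : (π l) (a - star b * b) = 0 := by
      rw [map_sub, map_mul, map_star, hy, sub_self]
    rw [← hnorm, this, norm_zero]
end

section
/- Let A be a locally C*-algebra with defining family {p_λ} and let π : A → B(H) be a *-morphism to the bounded operators on a Hilbert space H. Then π is continuous if and only if there exists λ ∈ Λ such that ‖π(a)‖ ≤ p_λ(a) for all a ∈ A. -/
open scoped ComplexOrder

/-!
Continuity of `φ` at `0` yields a basic neighbourhood of `0` on which `‖φ‖ < 1`; by directedness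
and monotonicity it contains a ball `{p_λ < δ}`, and scaling gives `ker π_λ ⊆ ker φ`. The bound
`‖φ a‖ ≤ p_λ(a)` gives the same inclusion directly. In both cases `φ` factors through the
surjection `π_λ` as a *-homomorphism `φ'` from the C*-algebra `B_λ` to `B(H)`, which is
contractive (giving the bound) and continuous (giving continuity of `φ = φ' ∘ π_λ`).
-/

open Filter Topology
open scoped CStarAlgebra

namespace StarAlgHom

variable {R A C D : Type*} [CommSemiring R] [Ring A] [Ring C] [Ring D]
  [Algebra R A] [Algebra R C] [Algebra R D] [Star A] [Star C] [Star D]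

noncomputable def liftOfSurjective (ψ : A →⋆ₐ[R] C) (hψ : Function.Surjective ψ)
    (φ : A →⋆ₐ[R] D) (h : ∀ a, ψ a = 0 → φ a = 0) : C →⋆ₐ[R] D :=
  let g := (ψ : A →+* C).liftOfSurjective hψ
    ⟨φ, fun a ha => RingHom.mem_ker.2 (h a (RingHom.mem_ker.1 ha))⟩
  have hg (a : A) : g (ψ a) = φ a := RingHom.liftOfSurjective_comp_apply _ hψ _ a
  { g with
    commutes' := fun r => by
      change g _ = _
      rw [← AlgHomClass.commutes ψ r, hg, AlgHomClass.commutes]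
    map_star' := fun c => by
      obtain ⟨a, rfl⟩ := hψ c
      change g _ = star (g _)
      rw [← map_star, hg, hg, map_star] }

@[simp]
theorem liftOfSurjective_apply (ψ : A →⋆ₐ[R] C) (hψ : Function.Surjective ψ)
    (φ : A →⋆ₐ[R] D) (h : ∀ a, ψ a = 0 → φ a = 0) (a : A) :
    liftOfSurjective ψ hψ φ h (ψ a) = φ a :=
  RingHom.liftOfSurjective_comp_apply _ hψ _ a

end StarAlgHom

theorem eq_zero_of_norm_lt_one_of_norm_lt {𝕜 E F G Φ Ψ : Type*} [NontriviallyNormedField 𝕜]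
    [AddCommGroup E] [Module 𝕜 E] [NormedAddCommGroup F] [NormedSpace 𝕜 F]
    [SeminormedAddCommGroup G] [Module 𝕜 G]
    [FunLike Φ E F] [LinearMapClass Φ 𝕜 E F] [FunLike Ψ E G] [LinearMapClass Ψ 𝕜 E G]
    (f : Φ) (g : Ψ) {δ : ℝ} (hδ : 0 < δ) (h : ∀ a, ‖g a‖ < δ → ‖f a‖ < 1) {a : E}
    (ha : g a = 0) : f a = 0 := by
  by_contra hfa
  obtain ⟨c, hc⟩ := NormedField.exists_lt_norm 𝕜 ‖f a‖⁻¹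
  have hlt := h (c • a) (by simpa [map_smul, ha] using hδ)
  rw [map_smul, norm_smul] at hlt
  have := (inv_lt_iff_one_lt_mul₀ (norm_pos_iff.2 hfa)).1 hc
  linarith [mul_comm ‖c‖ ‖f a‖]

theorem exists_forall_norm_lt_imp_mem_of_mem_nhds_zero {Λ A : Type*} [Preorder Λ] [Nonempty Λ]
    [IsDirected Λ (· ≤ ·)] [Zero A] [TopologicalSpace A] {B : Λ → Type*}
    [∀ l, SeminormedAddGroup (B l)] (π : ∀ l, A → B l) (hzero : ∀ l, π l 0 = 0)
    (hmono : ∀ ⦃l₁ l₂ : Λ⦄, l₁ ≤ l₂ → ∀ a, ‖π l₁ a‖ ≤ ‖π l₂ a‖)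
    (hind : IsInducing fun a l => π l a) {U : Set A} (hU : U ∈ 𝓝 0) :
    ∃ l, ∃ δ > 0, ∀ a, ‖π l a‖ < δ → a ∈ U := by
  rw [hind.nhds_eq_comap, nhds_pi,
    ((hasBasis_pi fun l => Metric.nhds_basis_ball).comap _).mem_iff] at hU
  obtain ⟨⟨I, r⟩, ⟨hI, hr⟩, hsub⟩ := hU
  obtain ⟨l, hl⟩ := hI.bddAbove
  obtain ⟨δ, hδr, hδ⟩ := ((hI.eventually_all.2 fun i hi => eventually_nhdsWithin_of_eventually_nhds
    (eventually_lt_nhds (hr i hi))).and self_mem_nhdsWithin).exists (f := 𝓝[>] (0 : ℝ))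
  refine ⟨l, δ, hδ, fun a ha => hsub fun i hi => ?_⟩
  rw [Metric.mem_ball, hzero, dist_zero_right]
  calc ‖π i a‖ ≤ ‖π l a‖ := hmono (hl hi) a
    _ < δ := ha
    _ < r i := hδr i hi

theorem stmt5_general {Λ : Type*} [Preorder Λ] {A : Type*} [Ring A] [StarRing A] [Algebra ℂ A]
    {B : Λ → Type*} [∀ l, NormedRing (B l)] [∀ l, StarRing (B l)] [∀ l, CStarRing (B l)]
    [∀ l, NormedAlgebra ℂ (B l)] [∀ l, StarModule ℂ (B l)] [∀ l, CompleteSpace (B l)]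
    (p : Λ → A → ℝ)
    (hmono : ∀ ⦃l₁ l₂ : Λ⦄, l₁ ≤ l₂ → ∀ a, p l₁ a ≤ p l₂ a)
    (π : ∀ l, A →⋆ₐ[ℂ] B l) (hsurj : ∀ l, Function.Surjective ⇑(π l))
    (hnorm : ∀ l a, ‖(π l) a‖ = p l a)
    [Nonempty Λ] [IsDirected Λ (· ≤ ·)] [TopologicalSpace A]
    (hind : Topology.IsInducing (fun a : A => fun l => (π l) a))
    {H : Type*} [NormedAddCommGroup H] [InnerProductSpace ℂ H] [CompleteSpace H]
    (φ : A →⋆ₐ[ℂ] (H →L[ℂ] H)) :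
    Continuous ⇑φ ↔ ∃ l : Λ, ∀ a : A, ‖φ a‖ ≤ p l a := by
  let (l : Λ) : CStarAlgebra (B l) := {}
  constructor
  · intro hφ
    obtain ⟨l, δ, hδ, hl⟩ := exists_forall_norm_lt_imp_mem_of_mem_nhds_zero (fun l => ⇑(π l))
      (fun l => map_zero (π l)) (fun l₁ l₂ h a => by simpa only [hnorm] using hmono h a) hind
      (hφ.tendsto' 0 0 (map_zero φ) (Metric.ball_mem_nhds 0 one_pos))
    have hker (a : A) (ha : π l a = 0) : φ a = 0 :=
      eq_zero_of_norm_lt_one_of_norm_lt φ (π l) hδ (fun a h => by simpa using hl a h) ha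
    refine ⟨l, fun a => ?_⟩
    rw [← hnorm, ← StarAlgHom.liftOfSurjective_apply (π l) (hsurj l) φ hker]
    exact NonUnitalStarAlgHom.norm_apply_le _ _
  · rintro ⟨l, hl⟩
    have hker (a : A) (ha : π l a = 0) : φ a = 0 :=
      norm_le_zero_iff.1 (by simpa [← hnorm, ha] using hl a)
    have hfactor : ⇑φ = StarAlgHom.liftOfSurjective (π l) (hsurj l) φ hker ∘ π l :=
      funext fun a => (StarAlgHom.liftOfSurjective_apply _ _ _ _ a).symm
    rw [hfactor]
    exact (map_continuous _).comp ((continuous_apply l).comp hind.continuous)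

/-- a *-morphism `φ : A → B(H)` is continuous iff `‖φ a‖ ≤ p_λ(a)` for some `λ`. -/
theorem stmt5 {Λ : Type*} [Preorder Λ] {A : Type*} [Ring A] [StarRing A] [Algebra ℂ A] [StarModule ℂ A]
    {B : Λ → Type*} [∀ l, NormedRing (B l)] [∀ l, StarRing (B l)] [∀ l, CStarRing (B l)]
    [∀ l, NormedAlgebra ℂ (B l)] [∀ l, StarModule ℂ (B l)] [∀ l, CompleteSpace (B l)]
    (p : Λ → A → ℝ) (hp : ∀ l, IsCstarSeminorm (p l))
    (hmono : ∀ ⦃l₁ l₂ : Λ⦄, l₁ ≤ l₂ → ∀ a, p l₁ a ≤ p l₂ a)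
    (π : ∀ l, A →⋆ₐ[ℂ] B l) (hsurj : ∀ l, Function.Surjective ⇑(π l))
    (hnorm : ∀ l a, ‖(π l) a‖ = p l a)
    [Nonempty Λ] [IsDirected Λ (· ≤ ·)] [TopologicalSpace A]
    (hind : Topology.IsInducing (fun a : A => fun l => (π l) a))
    {H : Type*} [NormedAddCommGroup H] [InnerProductSpace ℂ H] [CompleteSpace H]
    (φ : A →⋆ₐ[ℂ] (H →L[ℂ] H)) :
    Continuous ⇑φ ↔ ∃ l : Λ, ∀ a : A, ‖φ a‖ ≤ p l a :=
  stmt5_general p hmono π hsurj hnorm hind φ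
end

section
/- Let S₁ ⊆ A₁ and S₂ ⊆ A₂ be local operator systems in unital locally C*-algebras with defining seminorm families indexed by the same set Λ. A linear map φ : S₁ → S₂ is an admissible local completely positive map if and only if there exists an inverse system (φ_λ)_λ of completely positive maps φ_λ : (S₁)_λ → (S₂)_λ with φ = lim← φ_λ (i.e., φ_λ ∘ π^{A₁}_λ|_{S₁} = π^{A₂}_λ ∘ φ for all λ). -/
open scoped ComplexOrder

/-! Everything happens one seminorm index `λ` at a time. Since `p_λ = ‖π_λ ·‖`, a matrix is
annihilated by the `λ`-th matrix seminorm exactly when `π_λ` kills it entrywise, and, `π_λ` being a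
surjective *-homomorphism, it is `λ`-positive exactly when its image under `π_λ` has the form
`y* y`. Admissibility at `λ` thus says that `φ` maps `ker π₁_λ ∩ S₁` into `ker π₂_λ` (the `n = 1`
case), which is exactly what lets it descend to `φ_λ : (S₁)_λ → (S₂)_λ`, and that the amplified
images stay positive, which is complete positivity of `φ_λ` because every matrix over `(S₁)_λ`
lifts to one over `S₁`. -/

theorem Matrix.map_star_mul_self {R S F : Type*} [Semiring R] [StarRing R] [Semiring S]
    [StarRing S] [FunLike F R S] [RingHomClass F R S] [StarHomClass F R S] {n : Type*}
    [Fintype n] (f : F) (x : Matrix n n R) :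
    (star x * x).map f = star (x.map f) * x.map f := by
  ext i j
  simp [Matrix.mul_apply, map_sum, map_star]

theorem Matrix.exists_map_eq {α β : Type*} {f : α → β} (hf : Function.Surjective f)
    {m n : Type*} (N : Matrix m n β) : ∃ M : Matrix m n α, M.map f = N :=
  ⟨Matrix.of fun i j => Function.surjInv hf (N i j),
    Matrix.ext fun i j => Function.surjInv_eq hf (N i j)⟩

theorem Matrix.forall_map_eq_zero_imp_iff {X Y W : Type*} [Zero Y] [Zero W] (g : X → Y)
    (h : X → W) :
    (∀ (n : ℕ) (M : Matrix (Fin n) (Fin n) X), M.map g = 0 → M.map h = 0) ↔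
      ∀ x, g x = 0 → h x = 0 := by
  refine ⟨fun H x hx => ?_, fun H n M hM => Matrix.ext fun i j => H _ (congrFun₂ hM i j)⟩
  simpa using congrFun₂ (H 1 (Matrix.of fun _ _ => x) (Matrix.ext fun _ _ => hx)) 0 0

theorem LinearMap.exists_comp_eq_of_ker_le {R M N P : Type*} [Ring R] [AddCommGroup M]
    [AddCommGroup N] [AddCommGroup P] [Module R M] [Module R N] [Module R P]
    {q : M →ₗ[R] N} (hq : Function.Surjective q) {f : M →ₗ[R] P}
    (h : LinearMap.ker q ≤ LinearMap.ker f) : ∃ g : N →ₗ[R] P, g ∘ₗ q = f :=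
  ⟨(LinearMap.ker q).liftQ f h ∘ₗ (q.quotKerEquivOfSurjective hq).symm.toLinearMap,
    LinearMap.ext fun x => by simp [LinearMap.quotKerEquivOfSurjective_symm_apply]⟩

theorem IsMatrixCstarSeminormFamily.eq_zero_iff_map_eq_zero {A B : Type*} [Ring A]
    [StarRing A] [Algebra ℂ A] [NormedAddCommGroup B] {p : A → ℝ}
    {pn : ∀ n : ℕ, Matrix (Fin n) (Fin n) A → ℝ} (hpn : IsMatrixCstarSeminormFamily p pn)
    {π : A → B} (hπ : ∀ a, ‖π a‖ = p a) {n : ℕ} (M : Matrix (Fin n) (Fin n) A) :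
    pn n M = 0 ↔ M.map π = 0 := by
  simp only [hpn.ker, ← hπ, norm_eq_zero]
  exact ⟨fun h => Matrix.ext h, fun h i j => congrFun₂ h i j⟩

theorem lamPos_iff_exists_map_eq_star_mul_self {A B F : Type*} [Ring A] [StarRing A]
    [Ring B] [StarRing B] [FunLike F A B] [RingHomClass F A B] [StarHomClass F A B]
    {pn : ∀ n : ℕ, Matrix (Fin n) (Fin n) A → ℝ} {π : F} (hπ : Function.Surjective π)
    {n : ℕ} (hker : ∀ M : Matrix (Fin n) (Fin n) A, pn n M = 0 ↔ M.map π = 0)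
    (M : Matrix (Fin n) (Fin n) A) :
    LamPos pn n M ↔ ∃ y : Matrix (Fin n) (Fin n) B, M.map π = star y * y := by
  constructor
  · rintro ⟨x, c, hc, rfl⟩
    refine ⟨x.map π, ?_⟩
    rw [Matrix.map_add _ (map_add π), Matrix.map_star_mul_self, (hker c).1 hc, add_zero]
  · rintro ⟨y, hy⟩
    obtain ⟨x, rfl⟩ := Matrix.exists_map_eq hπ y
    refine ⟨x, M - star x * x, (hker _).2 ?_, by abel⟩
    rw [Matrix.map_sub _ (map_sub π), hy, Matrix.map_star_mul_self, sub_self]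

section Level

variable {A₁ A₂ B₁ B₂ : Type*} [Ring A₁] [StarRing A₁] [Algebra ℂ A₁]
  [Ring A₂] [StarRing A₂] [Algebra ℂ A₂] [Ring B₁] [StarRing B₁] [Algebra ℂ B₁]
  [Ring B₂] [StarRing B₂] [Algebra ℂ B₂]
  (π₁ : A₁ →⋆ₐ[ℂ] B₁) (π₂ : A₂ →⋆ₐ[ℂ] B₂) (S₁ : Submodule ℂ A₁) (S₂ : Submodule ℂ A₂)
  (φ : ↥S₁ →ₗ[ℂ] ↥S₂)

def IsCPModulo : Prop :=
  ∀ (n : ℕ) (M : Matrix (Fin n) (Fin n) ↥S₁),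
    (∃ y : Matrix (Fin n) (Fin n) B₁, (M.map Subtype.val).map π₁ = star y * y) →
    ∃ z : Matrix (Fin n) (Fin n) B₂, (M.map fun s => ((φ s : ↥S₂) : A₂)).map π₂ = star z * z

local notation "ρ₁" => π₁.toAlgHom.toLinearMap.submoduleMap S₁

theorem map_submoduleMap_map_eq {ψ : ↥(S₁.map π₁.toAlgHom.toLinearMap) →ₗ[ℂ]
      ↥(S₂.map π₂.toAlgHom.toLinearMap)}
    (hψ : ∀ s : ↥S₁, ((ψ ⟨π₁ (s : A₁), Submodule.mem_map_of_mem s.2⟩ :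
      ↥(S₂.map π₂.toAlgHom.toLinearMap)) : B₂) = π₂ ((φ s : ↥S₂) : A₂))
    {n : ℕ} (M : Matrix (Fin n) (Fin n) ↥S₁) :
    (M.map ρ₁).map (fun t => ((ψ t : ↥(S₂.map π₂.toAlgHom.toLinearMap)) : B₂)) =
      (M.map fun s => ((φ s : ↥S₂) : A₂)).map π₂ :=
  Matrix.ext fun i j => hψ (M i j)

theorem isCPModulo_and_ker_le_iff_exists_cp_descent :
    (IsCPModulo π₁ π₂ S₁ S₂ φ ∧ ∀ s : ↥S₁, π₁ (s : A₁) = 0 → π₂ ((φ s : ↥S₂) : A₂) = 0) ↔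
      ∃ ψ : ↥(S₁.map π₁.toAlgHom.toLinearMap) →ₗ[ℂ] ↥(S₂.map π₂.toAlgHom.toLinearMap),
        IsCstarCPmapOn (S₁.map π₁.toAlgHom.toLinearMap) (S₂.map π₂.toAlgHom.toLinearMap) ψ ∧
        ∀ s : ↥S₁, ((ψ ⟨π₁ (s : A₁), Submodule.mem_map_of_mem s.2⟩ :
          ↥(S₂.map π₂.toAlgHom.toLinearMap)) : B₂) = π₂ ((φ s : ↥S₂) : A₂) := by
  constructor
  · rintro ⟨hcp, hker⟩
    have hle : LinearMap.ker ρ₁ ≤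
        LinearMap.ker (π₂.toAlgHom.toLinearMap.submoduleMap S₂ ∘ₗ φ) := fun s hs =>
      Subtype.ext (hker s (congrArg Subtype.val hs))
    obtain ⟨ψ, hψ⟩ := LinearMap.exists_comp_eq_of_ker_le
      (LinearMap.submoduleMap_surjective _ S₁) hle
    have hcompat : ∀ s : ↥S₁, ((ψ ⟨π₁ (s : A₁), Submodule.mem_map_of_mem s.2⟩ :
        ↥(S₂.map π₂.toAlgHom.toLinearMap)) : B₂) = π₂ ((φ s : ↥S₂) : A₂) := fun s =>
      congrArg Subtype.val (LinearMap.congr_fun hψ s)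
    refine ⟨ψ, fun n N hN => ?_, hcompat⟩
    obtain ⟨M, rfl⟩ := Matrix.exists_map_eq (LinearMap.submoduleMap_surjective _ S₁) N
    rw [map_submoduleMap_map_eq π₁ π₂ S₁ S₂ φ hcompat M]
    exact hcp n M hN
  · rintro ⟨ψ, hcp, hcompat⟩
    refine ⟨fun n M hM => ?_, fun s hs => ?_⟩
    · rw [← map_submoduleMap_map_eq π₁ π₂ S₁ S₂ φ hcompat M]
      exact hcp n (M.map ρ₁) hM
    · have hs' : ρ₁ s = 0 := Subtype.ext hs
      rw [← hcompat s]
      exact congrArg Subtype.val ((congrArg ψ hs').trans (map_zero ψ))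

end Level

theorem isAdmLocCP_iff {Λ A₁ A₂ : Type*} [Ring A₁] [StarRing A₁] [Algebra ℂ A₁]
    [Ring A₂] [StarRing A₂] [Algebra ℂ A₂] {B₁ B₂ : Λ → Type*} [∀ l, Ring (B₁ l)]
    [∀ l, StarRing (B₁ l)] [∀ l, Algebra ℂ (B₁ l)] [∀ l, Ring (B₂ l)] [∀ l, StarRing (B₂ l)]
    [∀ l, Algebra ℂ (B₂ l)] {π₁ : ∀ l, A₁ →⋆ₐ[ℂ] B₁ l} (hsurj₁ : ∀ l, Function.Surjective (π₁ l))
    {π₂ : ∀ l, A₂ →⋆ₐ[ℂ] B₂ l} (hsurj₂ : ∀ l, Function.Surjective (π₂ l))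
    {pn₁ : Λ → ∀ n : ℕ, Matrix (Fin n) (Fin n) A₁ → ℝ}
    {pn₂ : Λ → ∀ n : ℕ, Matrix (Fin n) (Fin n) A₂ → ℝ}
    (hker₁ : ∀ l n (M : Matrix (Fin n) (Fin n) A₁), pn₁ l n M = 0 ↔ M.map (π₁ l) = 0)
    (hker₂ : ∀ l n (M : Matrix (Fin n) (Fin n) A₂), pn₂ l n M = 0 ↔ M.map (π₂ l) = 0)
    (S₁ : Submodule ℂ A₁) (S₂ : Submodule ℂ A₂) (φ : ↥S₁ →ₗ[ℂ] ↥S₂) :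
    IsAdmLocCP pn₁ pn₂ S₁ S₂ φ ↔ ∀ l, IsCPModulo (π₁ l) (π₂ l) S₁ S₂ φ ∧
      ∀ s : ↥S₁, π₁ l (s : A₁) = 0 → π₂ l ((φ s : ↥S₂) : A₂) = 0 := by
  refine forall_congr' fun l => ?_
  have hpos : (∀ (n : ℕ) (M : Matrix (Fin n) (Fin n) ↥S₁),
      LamPos (pn₁ l) n (M.map Subtype.val) →
        LamPos (pn₂ l) n (M.map fun s => ((φ s : ↥S₂) : A₂))) ↔
      IsCPModulo (π₁ l) (π₂ l) S₁ S₂ φ := forall₂_congr fun n M => by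
    rw [lamPos_iff_exists_map_eq_star_mul_self (hsurj₁ l) (hker₁ l n),
      lamPos_iff_exists_map_eq_star_mul_self (hsurj₂ l) (hker₂ l n)]
  have hzero : (∀ (n : ℕ) (M : Matrix (Fin n) (Fin n) ↥S₁),
      pn₁ l n (M.map Subtype.val) = 0 → pn₂ l n (M.map fun s => ((φ s : ↥S₂) : A₂)) = 0) ↔
      ∀ s : ↥S₁, π₁ l (s : A₁) = 0 → π₂ l ((φ s : ↥S₂) : A₂) = 0 := by
    simp only [hker₁ l, hker₂ l, Matrix.map_map]
    exact Matrix.forall_map_eq_zero_imp_iff _ _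
  simp only [forall_and]
  exact and_congr hpos hzero

theorem stmt7_general {Λ : Type*} {A₁ : Type*} [Ring A₁] [StarRing A₁] [Algebra ℂ A₁]
    {A₂ : Type*} [Ring A₂] [StarRing A₂] [Algebra ℂ A₂]
    {B₁ : Λ → Type*} [∀ l, NormedRing (B₁ l)] [∀ l, StarRing (B₁ l)]
    [∀ l, NormedAlgebra ℂ (B₁ l)]
    {B₂ : Λ → Type*} [∀ l, NormedRing (B₂ l)] [∀ l, StarRing (B₂ l)]
    [∀ l, NormedAlgebra ℂ (B₂ l)]
    (p₁ : Λ → A₁ → ℝ) (p₂ : Λ → A₂ → ℝ)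
    (π₁ : ∀ l, A₁ →⋆ₐ[ℂ] B₁ l) (hsurj₁ : ∀ l, Function.Surjective ⇑(π₁ l))
    (hnorm₁ : ∀ l a, ‖(π₁ l) a‖ = p₁ l a)
    (π₂ : ∀ l, A₂ →⋆ₐ[ℂ] B₂ l) (hsurj₂ : ∀ l, Function.Surjective ⇑(π₂ l))
    (hnorm₂ : ∀ l a, ‖(π₂ l) a‖ = p₂ l a)
    (pn₁ : Λ → ∀ n : ℕ, Matrix (Fin n) (Fin n) A₁ → ℝ)
    (hpn₁ : ∀ l, IsMatrixCstarSeminormFamily (p₁ l) (pn₁ l))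
    (pn₂ : Λ → ∀ n : ℕ, Matrix (Fin n) (Fin n) A₂ → ℝ)
    (hpn₂ : ∀ l, IsMatrixCstarSeminormFamily (p₂ l) (pn₂ l))
    (S₁ : Submodule ℂ A₁) (S₂ : Submodule ℂ A₂) (φ : ↥S₁ →ₗ[ℂ] ↥S₂) :
    IsAdmLocCP pn₁ pn₂ S₁ S₂ φ ↔
      ∃ ψ : ∀ l : Λ, ↥(S₁.map (π₁ l).toAlgHom.toLinearMap) →ₗ[ℂ]
          ↥(S₂.map (π₂ l).toAlgHom.toLinearMap),
        (∀ l : Λ, IsCstarCPmapOn (S₁.map (π₁ l).toAlgHom.toLinearMap)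
          (S₂.map (π₂ l).toAlgHom.toLinearMap) (ψ l)) ∧
        ∀ (l : Λ) (s : ↥S₁),
          ((ψ l ⟨(π₁ l) (s : A₁), Submodule.mem_map_of_mem s.2⟩ :
              ↥(S₂.map (π₂ l).toAlgHom.toLinearMap)) : B₂ l)
            = (π₂ l) ((φ s : ↥S₂) : A₂) := by
  rw [isAdmLocCP_iff hsurj₁ hsurj₂
    (fun l _ => (hpn₁ l).eq_zero_iff_map_eq_zero (hnorm₁ l))
    (fun l _ => (hpn₂ l).eq_zero_iff_map_eq_zero (hnorm₂ l))]
  simp only [isCPModulo_and_ker_le_iff_exists_cp_descent, Classical.skolem, forall_and]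

/-- `φ : S₁ → S₂` is an admissible local completely positive map iff it is the
inverse limit of an inverse system of completely positive maps `φ_λ : (S₁)_λ → (S₂)_λ`. -/
theorem stmt7 {Λ : Type*} [Preorder Λ] {A₁ : Type*} [Ring A₁] [StarRing A₁] [Algebra ℂ A₁]
    {A₂ : Type*} [Ring A₂] [StarRing A₂] [Algebra ℂ A₂]
    {B₁ : Λ → Type*} [∀ l, NormedRing (B₁ l)] [∀ l, StarRing (B₁ l)] [∀ l, CStarRing (B₁ l)]
    [∀ l, NormedAlgebra ℂ (B₁ l)] [∀ l, StarModule ℂ (B₁ l)] [∀ l, CompleteSpace (B₁ l)]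
    {B₂ : Λ → Type*} [∀ l, NormedRing (B₂ l)] [∀ l, StarRing (B₂ l)] [∀ l, CStarRing (B₂ l)]
    [∀ l, NormedAlgebra ℂ (B₂ l)] [∀ l, StarModule ℂ (B₂ l)] [∀ l, CompleteSpace (B₂ l)]
    (p₁ : Λ → A₁ → ℝ) (hp₁ : ∀ l, IsCstarSeminorm (p₁ l))
    (hmono₁ : ∀ ⦃l₁ l₂ : Λ⦄, l₁ ≤ l₂ → ∀ a, p₁ l₁ a ≤ p₁ l₂ a)
    (p₂ : Λ → A₂ → ℝ) (hp₂ : ∀ l, IsCstarSeminorm (p₂ l))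
    (hmono₂ : ∀ ⦃l₁ l₂ : Λ⦄, l₁ ≤ l₂ → ∀ a, p₂ l₁ a ≤ p₂ l₂ a)
    (π₁ : ∀ l, A₁ →⋆ₐ[ℂ] B₁ l) (hsurj₁ : ∀ l, Function.Surjective ⇑(π₁ l))
    (hnorm₁ : ∀ l a, ‖(π₁ l) a‖ = p₁ l a)
    (π₂ : ∀ l, A₂ →⋆ₐ[ℂ] B₂ l) (hsurj₂ : ∀ l, Function.Surjective ⇑(π₂ l))
    (hnorm₂ : ∀ l a, ‖(π₂ l) a‖ = p₂ l a)
    (pn₁ : Λ → ∀ n : ℕ, Matrix (Fin n) (Fin n) A₁ → ℝ)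
    (hpn₁ : ∀ l, IsMatrixCstarSeminormFamily (p₁ l) (pn₁ l))
    (pn₂ : Λ → ∀ n : ℕ, Matrix (Fin n) (Fin n) A₂ → ℝ)
    (hpn₂ : ∀ l, IsMatrixCstarSeminormFamily (p₂ l) (pn₂ l))
    (S₁ : Submodule ℂ A₁) (hS₁star : ∀ s ∈ S₁, star s ∈ S₁) (hS₁one : (1 : A₁) ∈ S₁)
    (S₂ : Submodule ℂ A₂) (hS₂star : ∀ s ∈ S₂, star s ∈ S₂) (hS₂one : (1 : A₂) ∈ S₂)
    (φ : ↥S₁ →ₗ[ℂ] ↥S₂) :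
    IsAdmLocCP pn₁ pn₂ S₁ S₂ φ ↔
      ∃ ψ : ∀ l : Λ, ↥(S₁.map (π₁ l).toAlgHom.toLinearMap) →ₗ[ℂ]
          ↥(S₂.map (π₂ l).toAlgHom.toLinearMap),
        (∀ l : Λ, IsCstarCPmapOn (S₁.map (π₁ l).toAlgHom.toLinearMap)
          (S₂.map (π₂ l).toAlgHom.toLinearMap) (ψ l)) ∧
        ∀ (l : Λ) (s : ↥S₁),
          ((ψ l ⟨(π₁ l) (s : A₁), Submodule.mem_map_of_mem s.2⟩ :
              ↥(S₂.map (π₂ l).toAlgHom.toLinearMap)) : B₂ l)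
            = (π₂ l) ((φ s : ↥S₂) : A₂) :=
  stmt7_general p₁ p₂ π₁ hsurj₁ hnorm₁ π₂ hsurj₂ hnorm₂ pn₁ hpn₁ pn₂ hpn₂ S₁ S₂ φ
end

section
/- A linear map φ : S₁ → S₂ between local operator systems is local completely isometric if and only if there exists an inverse system (φ_λ)_λ of completely isometric maps φ_λ : (S₁)_λ → (S₂)_λ such that φ = lim← φ_λ. -/
open scoped ComplexOrder

/-- `φ : S₁ → S₂` is local completely isometric iff it is the inverse limit of an
inverse system of completely isometric maps `φ_λ : (S₁)_λ → (S₂)_λ`. -/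
theorem stmt9 {Λ : Type*} [Preorder Λ] {A₁ : Type*} [Ring A₁] [StarRing A₁] [Algebra ℂ A₁]
    {A₂ : Type*} [Ring A₂] [StarRing A₂] [Algebra ℂ A₂]
    {B₁ : Λ → Type*} [∀ l, NormedRing (B₁ l)] [∀ l, StarRing (B₁ l)] [∀ l, CStarRing (B₁ l)]
    [∀ l, NormedAlgebra ℂ (B₁ l)] [∀ l, StarModule ℂ (B₁ l)] [∀ l, CompleteSpace (B₁ l)]
    {B₂ : Λ → Type*} [∀ l, NormedRing (B₂ l)] [∀ l, StarRing (B₂ l)] [∀ l, CStarRing (B₂ l)]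
    [∀ l, NormedAlgebra ℂ (B₂ l)] [∀ l, StarModule ℂ (B₂ l)] [∀ l, CompleteSpace (B₂ l)]
    (p₁ : Λ → A₁ → ℝ) (hp₁ : ∀ l, IsCstarSeminorm (p₁ l))
    (hmono₁ : ∀ ⦃l₁ l₂ : Λ⦄, l₁ ≤ l₂ → ∀ a, p₁ l₁ a ≤ p₁ l₂ a)
    (p₂ : Λ → A₂ → ℝ) (hp₂ : ∀ l, IsCstarSeminorm (p₂ l))
    (hmono₂ : ∀ ⦃l₁ l₂ : Λ⦄, l₁ ≤ l₂ → ∀ a, p₂ l₁ a ≤ p₂ l₂ a)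
    (π₁ : ∀ l, A₁ →⋆ₐ[ℂ] B₁ l) (hsurj₁ : ∀ l, Function.Surjective ⇑(π₁ l))
    (hnorm₁ : ∀ l a, ‖(π₁ l) a‖ = p₁ l a)
    (π₂ : ∀ l, A₂ →⋆ₐ[ℂ] B₂ l) (hsurj₂ : ∀ l, Function.Surjective ⇑(π₂ l))
    (hnorm₂ : ∀ l a, ‖(π₂ l) a‖ = p₂ l a)
    (pn₁ : Λ → ∀ n : ℕ, Matrix (Fin n) (Fin n) A₁ → ℝ)
    (hpn₁ : ∀ l, IsMatrixCstarSeminormFamily (p₁ l) (pn₁ l))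
    (pn₂ : Λ → ∀ n : ℕ, Matrix (Fin n) (Fin n) A₂ → ℝ)
    (hpn₂ : ∀ l, IsMatrixCstarSeminormFamily (p₂ l) (pn₂ l))
    (S₁ : Submodule ℂ A₁) (hS₁star : ∀ s ∈ S₁, star s ∈ S₁) (hS₁one : (1 : A₁) ∈ S₁)
    (S₂ : Submodule ℂ A₂) (hS₂star : ∀ s ∈ S₂, star s ∈ S₂) (hS₂one : (1 : A₂) ∈ S₂)
    (Pn₁ : ∀ l : Λ, ∀ n : ℕ, Matrix (Fin n) (Fin n) (B₁ l) → ℝ)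
    (hPn₁ : ∀ l, IsMatrixCstarSeminormFamily (fun b : B₁ l => ‖b‖) (Pn₁ l))
    (hcomp₁ : ∀ (l : Λ) (n : ℕ) (M : Matrix (Fin n) (Fin n) A₁),
      pn₁ l n M = Pn₁ l n (M.map ⇑(π₁ l)))
    (Pn₂ : ∀ l : Λ, ∀ n : ℕ, Matrix (Fin n) (Fin n) (B₂ l) → ℝ)
    (hPn₂ : ∀ l, IsMatrixCstarSeminormFamily (fun b : B₂ l => ‖b‖) (Pn₂ l))
    (hcomp₂ : ∀ (l : Λ) (n : ℕ) (M : Matrix (Fin n) (Fin n) A₂),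
      pn₂ l n M = Pn₂ l n (M.map ⇑(π₂ l)))
    (φ : ↥S₁ →ₗ[ℂ] ↥S₂) :
    IsLocCompIsometric pn₁ pn₂ S₁ S₂ φ ↔
      ∃ ψ : ∀ l : Λ, ↥(S₁.map (π₁ l).toAlgHom.toLinearMap) →ₗ[ℂ]
          ↥(S₂.map (π₂ l).toAlgHom.toLinearMap),
        (∀ (l : Λ) (n : ℕ) (M : Matrix (Fin n) (Fin n) ↥(S₁.map (π₁ l).toAlgHom.toLinearMap)),
          Pn₂ l n (M.map fun s => ((ψ l s : ↥(S₂.map (π₂ l).toAlgHom.toLinearMap)) : B₂ l))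
            = Pn₁ l n (M.map Subtype.val)) ∧
        ∀ (l : Λ) (s : ↥S₁),
          ((ψ l ⟨(π₁ l) (s : A₁), Submodule.mem_map_of_mem s.2⟩ :
              ↥(S₂.map (π₂ l).toAlgHom.toLinearMap)) : B₂ l)
            = (π₂ l) ((φ s : ↥S₂) : A₂) := by
  classical
  constructor
  · intro hiso
    have key : ∀ l : Λ, ∃ ψl : ↥(S₁.map (π₁ l).toAlgHom.toLinearMap) →ₗ[ℂ]
        ↥(S₂.map (π₂ l).toAlgHom.toLinearMap),
        ∀ s : ↥S₁,
          ((ψl ⟨(π₁ l) (s : A₁), Submodule.mem_map_of_mem s.2⟩ :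
              ↥(S₂.map (π₂ l).toAlgHom.toLinearMap)) : B₂ l)
            = (π₂ l) ((φ s : ↥S₂) : A₂) := by
      intro l
      set r : ↥S₁ →ₗ[ℂ] ↥(S₁.map (π₁ l).toAlgHom.toLinearMap) :=
        ((π₁ l).toAlgHom.toLinearMap).submoduleMap S₁ with hr_def
      set h : ↥S₁ →ₗ[ℂ] ↥(S₂.map (π₂ l).toAlgHom.toLinearMap) :=
        (((π₂ l).toAlgHom.toLinearMap).submoduleMap S₂).comp φ with hh_def
      have hr : Function.Surjective r := LinearMap.submoduleMap_surjective _ _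
      have hle : LinearMap.ker r ≤ LinearMap.ker h := by
        intro s hs
        have h0 : (π₁ l) (s : A₁) = 0 := by
          have := congrArg Subtype.val (LinearMap.mem_ker.1 hs)
          simpa [hr_def, LinearMap.submoduleMap] using this
        have hp0 : p₁ l (s : A₁) = 0 := by rw [← hnorm₁ l, h0, norm_zero]
        have hpn0 : pn₁ l 1 ((Matrix.of fun _ _ => s : Matrix (Fin 1) (Fin 1) ↥S₁).map Subtype.val)
            = 0 := by
          have : ((Matrix.of fun _ _ => s : Matrix (Fin 1) (Fin 1) ↥S₁).map Subtype.val)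
              = (fun _ _ => (s : A₁)) := rfl
          rw [this, (hpn₁ l).one, hp0]
        have := hiso l 1 (Matrix.of fun _ _ => s)
        rw [hpn0] at this
        have h2 : ((Matrix.of fun _ _ => s : Matrix (Fin 1) (Fin 1) ↥S₁).map
            fun t => ((φ t : ↥S₂) : A₂)) = (fun _ _ => ((φ s : ↥S₂) : A₂)) := rfl
        rw [h2, (hpn₂ l).one] at this
        have hnz : (π₂ l) ((φ s : ↥S₂) : A₂) = 0 := by
          have : ‖(π₂ l) ((φ s : ↥S₂) : A₂)‖ = 0 := by rw [hnorm₂ l, this]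
          simpa using this
        apply LinearMap.mem_ker.2
        apply Subtype.ext
        simpa [hh_def, LinearMap.submoduleMap] using hnz
      refine ⟨(LinearMap.ker r).liftQ h hle ∘ₗ
        (r.quotKerEquivOfSurjective hr).symm.toLinearMap, ?_⟩
      intro s
      have hmk : (r.quotKerEquivOfSurjective hr) (Submodule.Quotient.mk s) = r s := by
        rfl
      have hsymm : (r.quotKerEquivOfSurjective hr).symm (r s) = Submodule.Quotient.mk s := by
        rw [← hmk, LinearEquiv.symm_apply_apply]
      have hval : (⟨(π₁ l) (s : A₁), Submodule.mem_map_of_mem s.2⟩ :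
          ↥(S₁.map (π₁ l).toAlgHom.toLinearMap)) = r s := by
        apply Subtype.ext; rfl
      rw [hval]
      simp only [LinearMap.comp_apply, LinearEquiv.coe_toLinearMap, hsymm,
        Submodule.liftQ_apply]
      rfl
    choose ψ hψ using key
    refine ⟨ψ, ?_, hψ⟩
    intro l n M
    have hmem : ∀ i j, ∃ a, a ∈ S₁ ∧ (π₁ l) a = ((M i j : ↥(S₁.map _)) : B₁ l) :=
      fun i j => Submodule.mem_map.1 (M i j).2
    choose N hN₁ hN₂ using hmem
    set N' : Matrix (Fin n) (Fin n) ↥S₁ := fun i j => ⟨N i j, hN₁ i j⟩ with hN'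
    have e1 : M.map Subtype.val = (N'.map Subtype.val).map ⇑(π₁ l) := by
      ext i j
      simp only [Matrix.map_apply, hN']
      exact (hN₂ i j).symm
    have e2 : (M.map fun s => ((ψ l s : ↥(S₂.map (π₂ l).toAlgHom.toLinearMap)) : B₂ l))
        = ((N'.map fun s => ((φ s : ↥S₂) : A₂)).map ⇑(π₂ l)) := by
      ext i j
      simp only [Matrix.map_apply]
      have hM : M i j = ⟨(π₁ l) ((N' i j : ↥S₁) : A₁),
          Submodule.mem_map_of_mem (N' i j).2⟩ := by
        apply Subtype.ext
        exact (hN₂ i j).symm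
      rw [hM, hψ l (N' i j)]
    rw [e1, e2, ← hcomp₁, ← hcomp₂, hiso l n N']
  · rintro ⟨ψ, hiso', hcompat⟩ l n M
    set M' : Matrix (Fin n) (Fin n) ↥(S₁.map (π₁ l).toAlgHom.toLinearMap) :=
      fun i j => ⟨(π₁ l) ((M i j : ↥S₁) : A₁), Submodule.mem_map_of_mem (M i j).2⟩ with hM'
    have e1 : (M.map Subtype.val).map ⇑(π₁ l) = M'.map Subtype.val := by
      ext i j; rfl
    have e2 : ((M.map fun s => ((φ s : ↥S₂) : A₂)).map ⇑(π₂ l))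
        = M'.map fun s => ((ψ l s : ↥(S₂.map (π₂ l).toAlgHom.toLinearMap)) : B₂ l) := by
      ext i j
      simp only [Matrix.map_apply, hM']
      exact (hcompat l (M i j)).symm
    rw [hcomp₂, e2, hiso' l n M', hcomp₁, e1]
end

section
/- Let A be a Fréchet locally C*-algebra and I a closed two-sided *-ideal of A. Then for each λ, the C*-algebras (A/I)_λ (the completion of (A/I)/ker p̂_λ with respect to the quotient seminorm p̂_λ(a + I) = inf{p_λ(a+b) : b ∈ I}) and A_λ/I_λ are *-isomorphic, where I_λ is the closure of π^A_λ(I) in A_λ. -/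
open scoped ComplexOrder

/-- for a Fréchet locally C*-algebra `A` and a closed two-sided *-ideal `I`,
the C*-algebras `(A/I)_λ` (here `D`, characterized by a dense-range morphism `σ` from `A`
whose norm is the quotient seminorm) and `A_λ/I_λ` (here `E`, characterized by a surjective
morphism `τ` from `A_λ` whose norm is the distance to the closure of `π_λ(I)`) are
*-isomorphic. -/
theorem stmt16 {A : Type*} [Ring A] [StarRing A] [Algebra ℂ A] [TopologicalSpace A]
    {B : ℕ → Type*} [∀ l, NormedRing (B l)] [∀ l, StarRing (B l)] [∀ l, CStarRing (B l)]
    [∀ l, NormedAlgebra ℂ (B l)] [∀ l, StarModule ℂ (B l)] [∀ l, CompleteSpace (B l)]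
    (p : ℕ → A → ℝ) (hp : ∀ l, IsCstarSeminorm (p l))
    (hmono : ∀ ⦃l₁ l₂ : ℕ⦄, l₁ ≤ l₂ → ∀ a, p l₁ a ≤ p l₂ a)
    (π : ∀ l, A →⋆ₐ[ℂ] B l) (hsurj : ∀ l, Function.Surjective ⇑(π l))
    (hnorm : ∀ l a, ‖(π l) a‖ = p l a)
    (I : Set A) (hI : ∃ J : TwoSidedIdeal A, (J : Set A) = I)
    (hIstar : ∀ a ∈ I, star a ∈ I) (hIclosed : IsClosed I)
    (l : ℕ)
    {D : Type*} [NormedRing D] [StarRing D] [CStarRing D] [NormedAlgebra ℂ D]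
    [StarModule ℂ D] [CompleteSpace D]
    (σ : A →⋆ₐ[ℂ] D) (hσdense : DenseRange ⇑σ)
    (hσnorm : ∀ a : A, ‖σ a‖ = sInf {r : ℝ | ∃ b ∈ I, r = p l (a + b)})
    {E : Type*} [NormedRing E] [StarRing E] [CStarRing E] [NormedAlgebra ℂ E]
    [StarModule ℂ E] [CompleteSpace E]
    (τ : B l →⋆ₐ[ℂ] E) (hτsurj : Function.Surjective ⇑τ)
    (hτnorm : ∀ x : B l, ‖τ x‖ = Metric.infDist x (closure (⇑(π l) '' I))) :
    ∃ e : D ≃⋆ₐ[ℂ] E, ∀ a : A, e (σ a) = τ ((π l) a) := by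
  
  classical
  obtain ⟨J, hJ⟩ := hI
  have h0I : (0 : A) ∈ I := by rw [← hJ]; exact J.zero_mem
  have hnegI : ∀ b ∈ I, -b ∈ I := by
    intro b hb
    rw [← hJ] at hb ⊢
    exact neg_mem hb
  set g : A →⋆ₐ[ℂ] E := τ.comp (π l) with hg
  have hga : ∀ a : A, g a = τ ((π l) a) := fun a => rfl
  -- the set of quotient values
  have hTne : ∀ a : A, {r : ℝ | ∃ b ∈ I, r = p l (a + b)}.Nonempty := by
    intro a
    exact ⟨p l (a + 0), 0, h0I, rfl⟩
  have hbdd : ∀ a : A, BddBelow {r : ℝ | ∃ b ∈ I, r = p l (a + b)} := by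
    intro a
    refine ⟨0, ?_⟩
    rintro r ⟨b, hb, rfl⟩
    rw [← hnorm]
    exact norm_nonneg _
  have hSne : (⇑(π l) '' I).Nonempty := ⟨(π l) 0, 0, h0I, rfl⟩
  -- key norm identity
  have normEq : ∀ a : A, ‖g a‖ = ‖σ a‖ := by
    intro a
    rw [hσnorm]
    have h1 : ‖g a‖ = Metric.infDist ((π l) a) (⇑(π l) '' I) := by
      rw [hga, hτnorm, Metric.infDist_closure]
    rw [h1]
    apply le_antisymm
    · apply le_csInf (hTne a)
      rintro r ⟨b, hb, rfl⟩
      have hd : dist ((π l) a) ((π l) (-b)) = p l (a + b) := by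
        rw [dist_eq_norm, ← map_sub, sub_neg_eq_add, hnorm]
      rw [← hd]
      exact Metric.infDist_le_dist_of_mem ⟨-b, hnegI b hb, rfl⟩
    · by_contra hcon
      push_neg at hcon
      obtain ⟨y, hy, hlt⟩ := (Metric.infDist_lt_iff hSne).mp hcon
      obtain ⟨b, hb, rfl⟩ := hy
      have hmem : dist ((π l) a) ((π l) b) ∈ {r : ℝ | ∃ b ∈ I, r = p l (a + b)} := by
        refine ⟨-b, hnegI b hb, ?_⟩
        rw [dist_eq_norm, ← map_sub, hnorm, sub_eq_add_neg]
      exact absurd (csInf_le (hbdd a) hmem) (not_le.mpr hlt)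
  -- well-definedness
  have hker : ∀ a a' : A, σ a = σ a' → g a = g a' := by
    intro a a' h
    have h2 := normEq (a - a')
    rw [map_sub, map_sub, h, sub_self, norm_zero, norm_eq_zero, sub_eq_zero] at h2
    exact h2
  -- the subalgebra
  set S : Subalgebra ℂ D := σ.toAlgHom.range with hS
  have hmemS : ∀ s : S, ∃ a : A, σ a = (s : D) := fun s => s.2
  have hmemS' : ∀ a : A, σ a ∈ S := fun a => ⟨a, rfl⟩
  let f0 : S → E := fun s => g (hmemS s).choose
  have hf0 : ∀ (a : A) (s : S), σ a = (s : D) → f0 s = g a := by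
    intro a s h
    exact hker _ _ ((hmemS s).choose_spec.trans h.symm)
  let f : S →+* E :=
    { toFun := f0
      map_one' := by
        rw [hf0 1 1 (by simp), map_one]
      map_mul' := by
        intro s t
        show f0 (s * t) = f0 s * f0 t
        obtain ⟨a, ha⟩ := hmemS s
        obtain ⟨a', ha'⟩ := hmemS t
        rw [hf0 a s ha, hf0 a' t ha', hf0 (a * a') (s * t) (by push_cast [← ha, ← ha']; rw [map_mul]),
          map_mul]
      map_zero' := by
        show f0 0 = 0
        rw [hf0 0 0 (by simp), map_zero]
      map_add' := by
        intro s t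
        show f0 (s + t) = f0 s + f0 t
        obtain ⟨a, ha⟩ := hmemS s
        obtain ⟨a', ha'⟩ := hmemS t
        rw [hf0 a s ha, hf0 a' t ha', hf0 (a + a') (s + t) (by push_cast [← ha, ← ha']; rw [map_add]),
          map_add] }
  have hfval : ∀ (a : A) (s : S), σ a = (s : D) → f s = g a := hf0
  have hfiso : Isometry ⇑f := by
    intro s t
    obtain ⟨a, ha⟩ := hmemS s
    obtain ⟨a', ha'⟩ := hmemS t
    rw [edist_dist, edist_dist]
    congr 1
    rw [dist_eq_norm, hfval a s ha, hfval a' t ha', ← map_sub, normEq, map_sub, ha, ha',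
      ← dist_eq_norm, Subtype.dist_eq]
  have hfUC : UniformContinuous ⇑f := hfiso.uniformContinuous
  let i : S →+* D := (Subalgebra.val S).toRingHom
  have hic : ⇑i = (Subtype.val : S → D) := rfl
  have ue : IsUniformInducing ⇑i := by
    rw [hic]; exact isUniformEmbedding_subtype_val.isUniformInducing
  have dr : DenseRange ⇑i := by
    rw [DenseRange, hic, Subtype.range_coe_subtype]
    have : {x : D | x ∈ S} = Set.range ⇑σ := by
      ext x
      constructor
      · rintro ⟨a, rfl⟩; exact ⟨a, rfl⟩
      · rintro ⟨a, rfl⟩; exact ⟨a, rfl⟩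
    rw [this]
    exact hσdense
  let F : D →+* E := IsDenseInducing.extendRingHom ue dr hfUC
  have hFdef : ⇑F = (ue.isDenseInducing dr).extend ⇑f := rfl
  have hFcont : Continuous ⇑F := by
    rw [hFdef]
    exact (uniformContinuous_uniformly_extend ue dr hfUC).continuous
  have hFσ : ∀ a : A, F (σ a) = g a := by
    intro a
    have h1 : F (i ⟨σ a, hmemS' a⟩) = f ⟨σ a, hmemS' a⟩ :=
      IsDenseInducing.extend_eq (ue.isDenseInducing dr) hfUC.continuous _
    rw [hic] at h1
    rw [show ((⟨σ a, hmemS' a⟩ : S) : D) = σ a from rfl] at h1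
    rw [h1, hfval a ⟨σ a, hmemS' a⟩ rfl]
  have hFnorm : ∀ d : D, ‖F d‖ = ‖d‖ := by
    have h := hσdense.equalizer (continuous_norm.comp hFcont) continuous_norm
      (funext fun a => by simp only [Function.comp_apply, hFσ, normEq])
    exact fun d => congrFun h d
  have hFinj : Function.Injective ⇑F := by
    intro d d' h
    have h2 : ‖F (d - d')‖ = ‖d - d'‖ := hFnorm _
    rw [map_sub, h, sub_self, norm_zero] at h2
    rw [← sub_eq_zero]
    exact (norm_eq_zero.mp h2.symm)
  have hFsurj : Function.Surjective ⇑F := by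
    intro e
    obtain ⟨x, hx⟩ := hτsurj e
    obtain ⟨a, ha⟩ := hsurj l x
    exact ⟨σ a, by rw [hFσ, hga, ha, hx]⟩
  have hFsmul : ∀ (c : ℂ) (d : D), F (c • d) = c • F d := by
    intro c
    have h := hσdense.equalizer (hFcont.comp (continuous_const_smul c))
      ((continuous_const_smul c).comp hFcont)
      (funext fun a => by
        simp only [Function.comp_apply]
        rw [← map_smul σ c a, hFσ, hFσ, map_smul])
    exact fun d => congrFun h d
  have hFstar : ∀ d : D, F (star d) = star (F d) := by
    have h := hσdense.equalizer (hFcont.comp continuous_star)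
      (continuous_star.comp hFcont)
      (funext fun a => by
        simp only [Function.comp_apply]
        rw [← map_star σ a, hFσ, hFσ, map_star])
    exact fun d => congrFun h d
  let R : D ≃+* E := RingEquiv.ofBijective F ⟨hFinj, hFsurj⟩
  refine ⟨{ R with map_star' := hFstar, map_smul' := hFsmul }, ?_⟩
  intro a
  exact hFσ a
end
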